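/- Let M ≥ 2, a > 0, and let u, f : ℝ² → ℝ be such that on an open convex neighborhood U of a point (x*,y*), u is (M+1) times continuously differentiable, f is (M−1) times continuously differentiable, and a·(∂²u/∂x² + ∂²u/∂y²) = −f on U. Then there exist C > 0 and h₀ > 0 such that for all h ∈ (0,h₀] and all (x,y) with |x| ≤ 2h and |y| ≤ 2h: |u(x*+x, y*+y) − ∑_{(m,n)∈Λ_M, m≤1} u^(m,n)(x*,y*)·G_{m,n}(x,y) − (1/a)·∑_{(m,n)∈Λ_{M−2}} f^(m,n)(x*,y*)·H_{m,n}(x,y)| ≤ C·h^{M+1}; that is, near (x*,y*), u is determined up to O(h^{M+1}) by its partial derivatives u^(0,n) and u^(1,n) together with the derivatives of f. -/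

import Mathlib

/-!
Along the segment `s ↦ (x*, y*) + s • (x, y)` the `k`-th derivative of `u` is
`(x ∂ₓ + y ∂ᵧ)^k u`, so Taylor's theorem with the Lagrange remainder writes `u (x* + x) (y* + y)` as
the degree-`M` Taylor polynomial plus an error of size `O((|x| + |y|)^(M+1))`, uniformly on a
compact ball around `(x*, y*)`. Differentiating `a Δu = -f` gives the recursion
`u^(m+2,n) = -u^(m,n+2) - f^(m,n) / a` for the Taylor coefficients; iterating it until `m ≤ 1`
expresses every coefficient through `u^(0,·)`, `u^(1,·)` and derivatives of `f`, and regrouping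
the monomials produces exactly the sums against `G_{m,n}` and `H_{m,n}`.
-/

open Finset

/-- partial derivative in `x`. -/
noncomputable def pdx (v : ℝ → ℝ → ℝ) : ℝ → ℝ → ℝ := fun x y => deriv (fun t => v t y) x
/-- partial derivative in `y`. -/
noncomputable def pdy (v : ℝ → ℝ → ℝ) : ℝ → ℝ → ℝ := fun x y => deriv (fun t => v x t) y
/-- mixed partial derivative `∂^{m+n} v / ∂x^m ∂y^n`. -/
noncomputable def pd (m n : ℕ) (v : ℝ → ℝ → ℝ) : ℝ → ℝ → ℝ := pdx^[m] (pdy^[n] v)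

/-- the bivariate polynomial `G_{m,n}`. -/
noncomputable def Gpoly (m n : ℕ) (x y : ℝ) : ℝ :=
  ∑ l ∈ Finset.range (n / 2 + 1),
    (-1 : ℝ) ^ l * x ^ (m + 2 * l) * y ^ (n - 2 * l) /
      (Nat.factorial (m + 2 * l) * Nat.factorial (n - 2 * l) : ℝ)

/-- the bivariate polynomial `H_{m,n}`. -/
noncomputable def Hpoly (m n : ℕ) (x y : ℝ) : ℝ :=
  ∑ l ∈ Finset.Icc 1 (1 + n / 2),
    (-1 : ℝ) ^ l * x ^ (m + 2 * l) * y ^ (n + 2 - 2 * l) /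
      (Nat.factorial (m + 2 * l) * Nat.factorial (n + 2 - 2 * l) : ℝ)

/-- the index set `Λ_M = {(m,n) : m + n ≤ M}`. -/
def Lam (M : ℕ) : Finset (ℕ × ℕ) :=
  (Finset.range (M + 1) ×ˢ Finset.range (M + 1)).filter (fun p => p.1 + p.2 ≤ M)

/-- `Λ_M¹ = {(m,n) : m + n ≤ M, m ≤ 1}`. -/
def Lam1 (M : ℕ) : Finset (ℕ × ℕ) := (Lam M).filter (fun p => p.1 ≤ 1)

open Function
open scoped Nat Topology

theorem ContDiffOn.of_le_nat {E F : Type*} [NormedAddCommGroup E] [NormedSpace ℝ E]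
    [NormedAddCommGroup F] [NormedSpace ℝ F] {f : E → F} {s : Set E} {m n : ℕ}
    (hf : ContDiffOn ℝ n f s) (hmn : m ≤ n) : ContDiffOn ℝ m f s :=
  hf.of_le (by exact_mod_cast hmn)

section Slices

variable {F : Type*} [NormedAddCommGroup F] [NormedSpace ℝ F] {g : ℝ × ℝ → F} {p : ℝ × ℝ}

theorem DifferentiableAt.hasDerivAt_slice_fst (h : DifferentiableAt ℝ g p) :
    HasDerivAt (fun t => g (t, p.2)) (fderiv ℝ g p (1, 0)) p.1 :=
  h.hasFDerivAt.comp_hasDerivAt p.1 ((hasDerivAt_id p.1).prodMk (hasDerivAt_const p.1 p.2))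

theorem DifferentiableAt.hasDerivAt_slice_snd (h : DifferentiableAt ℝ g p) :
    HasDerivAt (fun t => g (p.1, t)) (fderiv ℝ g p (0, 1)) p.2 :=
  h.hasFDerivAt.comp_hasDerivAt p.2 ((hasDerivAt_const p.2 p.1).prodMk (hasDerivAt_id p.2))

end Slices

section PartialDeriv

variable {U : Set (ℝ × ℝ)} {v w : ℝ → ℝ → ℝ} {p : ℝ × ℝ}

theorem pdx_eq_fderiv (h : DifferentiableAt ℝ (uncurry v) p) :
    pdx v p.1 p.2 = fderiv ℝ (uncurry v) p (1, 0) :=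
  h.hasDerivAt_slice_fst.deriv

theorem pdy_eq_fderiv (h : DifferentiableAt ℝ (uncurry v) p) :
    pdy v p.1 p.2 = fderiv ℝ (uncurry v) p (0, 1) :=
  h.hasDerivAt_slice_snd.deriv

theorem ContDiffOn.differentiableAt_of_isOpen {n : ℕ} (hv : ContDiffOn ℝ (n + 1 : ℕ) (uncurry v) U)
    (hU : IsOpen U) (hp : p ∈ U) : DifferentiableAt ℝ (uncurry v) p :=
  (hv.contDiffAt (hU.mem_nhds hp)).differentiableAt (by simp)

theorem contDiffOn_pdx (hU : IsOpen U) {n : ℕ} (hv : ContDiffOn ℝ (n + 1 : ℕ) (uncurry v) U) :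
    ContDiffOn ℝ n (uncurry (pdx v)) U :=
  ((hv.fderiv_of_isOpen hU (by simp)).clm_apply contDiffOn_const).congr fun _ hq =>
    pdx_eq_fderiv (hv.differentiableAt_of_isOpen hU hq)

theorem contDiffOn_pdy (hU : IsOpen U) {n : ℕ} (hv : ContDiffOn ℝ (n + 1 : ℕ) (uncurry v) U) :
    ContDiffOn ℝ n (uncurry (pdy v)) U :=
  ((hv.fderiv_of_isOpen hU (by simp)).clm_apply contDiffOn_const).congr fun _ hq =>
    pdy_eq_fderiv (hv.differentiableAt_of_isOpen hU hq)

theorem eqOn_pdx (hU : IsOpen U) (h : Set.EqOn (uncurry v) (uncurry w) U) :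
    Set.EqOn (uncurry (pdx v)) (uncurry (pdx w)) U := fun _ hp =>
  Filter.EventuallyEq.deriv_eq <| Filter.mem_of_superset
    ((continuous_id.prodMk continuous_const).continuousAt.preimage_mem_nhds (hU.mem_nhds hp))
    fun _ ht => h ht

theorem eqOn_pdy (hU : IsOpen U) (h : Set.EqOn (uncurry v) (uncurry w) U) :
    Set.EqOn (uncurry (pdy v)) (uncurry (pdy w)) U := fun _ hp =>
  Filter.EventuallyEq.deriv_eq <| Filter.mem_of_superset
    ((continuous_const.prodMk continuous_id).continuousAt.preimage_mem_nhds (hU.mem_nhds hp))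
    fun _ ht => h ht

theorem pdx_add_eqOn (hU : IsOpen U) (hv : ContDiffOn ℝ (1 : ℕ) (uncurry v) U)
    (hw : ContDiffOn ℝ (1 : ℕ) (uncurry w) U) :
    Set.EqOn (uncurry (pdx (v + w))) (uncurry (pdx v + pdx w)) U := fun _ hp =>
  deriv_add (hv.differentiableAt_of_isOpen (n := 0) hU hp).hasDerivAt_slice_fst.differentiableAt
    (hw.differentiableAt_of_isOpen (n := 0) hU hp).hasDerivAt_slice_fst.differentiableAt

theorem pdy_add_eqOn (hU : IsOpen U) (hv : ContDiffOn ℝ (1 : ℕ) (uncurry v) U)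
    (hw : ContDiffOn ℝ (1 : ℕ) (uncurry w) U) :
    Set.EqOn (uncurry (pdy (v + w))) (uncurry (pdy v + pdy w)) U := fun _ hp =>
  deriv_add (hv.differentiableAt_of_isOpen (n := 0) hU hp).hasDerivAt_slice_snd.differentiableAt
    (hw.differentiableAt_of_isOpen (n := 0) hU hp).hasDerivAt_slice_snd.differentiableAt

theorem pdx_smul (c : ℝ) : Function.Commute pdx (c • ·) := by
  intro v
  funext x y
  exact deriv_const_mul_field c

theorem pdy_smul (c : ℝ) : Function.Commute pdy (c • ·) := by
  intro v
  funext x y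
  exact deriv_const_mul_field c

end PartialDeriv

section Iterate

variable {U : Set (ℝ × ℝ)} {T : (ℝ → ℝ → ℝ) → ℝ → ℝ → ℝ} {v w : ℝ → ℝ → ℝ}

theorem contDiffOn_iterate
    (hT : ∀ {n v}, ContDiffOn ℝ (n + 1 : ℕ) (uncurry v) U → ContDiffOn ℝ n (uncurry (T v)) U)
    (m : ℕ) {n : ℕ} (hv : ContDiffOn ℝ (m + n : ℕ) (uncurry v) U) :
    ContDiffOn ℝ n (uncurry (T^[m] v)) U := by
  induction m generalizing n with
  | zero => simpa using hv
  | succ m ih =>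
    rw [iterate_succ_apply']
    exact hT (ih (hv.of_le_nat (by omega)))

theorem eqOn_iterate
    (hT : ∀ {v w}, Set.EqOn (uncurry v) (uncurry w) U → Set.EqOn (uncurry (T v)) (uncurry (T w)) U)
    (m : ℕ) (h : Set.EqOn (uncurry v) (uncurry w) U) :
    Set.EqOn (uncurry (T^[m] v)) (uncurry (T^[m] w)) U := by
  induction m with
  | zero => exact h
  | succ m ih =>
    rw [iterate_succ_apply', iterate_succ_apply']
    exact hT ih

theorem iterate_add_eqOn
    (hTsmooth : ∀ {n v}, ContDiffOn ℝ (n + 1 : ℕ) (uncurry v) U → ContDiffOn ℝ n (uncurry (T v)) U)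
    (hTcongr : ∀ {v w}, Set.EqOn (uncurry v) (uncurry w) U →
      Set.EqOn (uncurry (T v)) (uncurry (T w)) U)
    (hTadd : ∀ {v w}, ContDiffOn ℝ (1 : ℕ) (uncurry v) U → ContDiffOn ℝ (1 : ℕ) (uncurry w) U →
      Set.EqOn (uncurry (T (v + w))) (uncurry (T v + T w)) U)
    (m : ℕ) (hv : ContDiffOn ℝ m (uncurry v) U) (hw : ContDiffOn ℝ m (uncurry w) U) :
    Set.EqOn (uncurry (T^[m] (v + w))) (uncurry (T^[m] v + T^[m] w)) U := by
  induction m with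
  | zero => exact fun _ _ => rfl
  | succ m ih =>
    rw [iterate_succ_apply', iterate_succ_apply', iterate_succ_apply']
    exact (hTcongr (ih (hv.of_le_nat m.le_succ) (hw.of_le_nat m.le_succ))).trans
      (hTadd (contDiffOn_iterate hTsmooth m hv) (contDiffOn_iterate hTsmooth m hw))

end Iterate

section MixedPartials

variable {U : Set (ℝ × ℝ)} {v w : ℝ → ℝ → ℝ}

theorem pdx_pdy_eqOn (hU : IsOpen U) (hv : ContDiffOn ℝ (2 : ℕ) (uncurry v) U) :
    Set.EqOn (uncurry (pdx (pdy v))) (uncurry (pdy (pdx v))) U := by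
  intro p hp
  have hvp : ContDiffAt ℝ 2 (uncurry v) p := hv.contDiffAt (hU.mem_nhds hp)
  have hD : DifferentiableAt ℝ (fderiv ℝ (uncurry v)) p :=
    (hvp.fderiv_right (m := 1) le_rfl).differentiableAt one_ne_zero
  have hnear : ∀ᶠ q in 𝓝 p, DifferentiableAt ℝ (uncurry v) q :=
    Filter.mem_of_superset (hU.mem_nhds hp) fun _ hq => hv.differentiableAt_of_isOpen hU hq
  have hxy : pdx (pdy v) p.1 p.2 = fderiv ℝ (fderiv ℝ (uncurry v)) p (1, 0) (0, 1) := by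
    have hslice : (fun t => pdy v t p.2) =ᶠ[𝓝 p.1] fun t => fderiv ℝ (uncurry v) (t, p.2) (0, 1) :=
      Filter.mem_of_superset
        ((continuous_id.prodMk continuous_const).continuousAt.preimage_mem_nhds hnear)
        fun t ht => pdy_eq_fderiv (p := (t, p.2)) ht
    rw [pdx, hslice.deriv_eq, (hD.hasDerivAt_slice_fst.clm_apply (hasDerivAt_const _ _)).deriv]
    simp
  have hyx : pdy (pdx v) p.1 p.2 = fderiv ℝ (fderiv ℝ (uncurry v)) p (0, 1) (1, 0) := by
    have hslice : (fun t => pdx v p.1 t) =ᶠ[𝓝 p.2] fun t => fderiv ℝ (uncurry v) (p.1, t) (1, 0) :=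
      Filter.mem_of_superset
        ((continuous_const.prodMk continuous_id).continuousAt.preimage_mem_nhds hnear)
        fun t ht => pdx_eq_fderiv (p := (p.1, t)) ht
    rw [pdy, hslice.deriv_eq, (hD.hasDerivAt_slice_snd.clm_apply (hasDerivAt_const _ _)).deriv]
    simp
  exact hxy.trans ((hvp.isSymmSndFDerivAt (by simp) _ _).trans hyx.symm)

theorem pdy_pdx_iterate_eqOn (hU : IsOpen U) (m : ℕ) {v : ℝ → ℝ → ℝ}
    (hv : ContDiffOn ℝ (m + 1 : ℕ) (uncurry v) U) :
    Set.EqOn (uncurry (pdy (pdx^[m] v))) (uncurry (pdx^[m] (pdy v))) U := by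
  induction m generalizing v with
  | zero => exact fun _ _ => rfl
  | succ m ih =>
    rw [iterate_succ_apply', iterate_succ_apply']
    exact (pdx_pdy_eqOn hU (contDiffOn_iterate (contDiffOn_pdx hU) m hv)).symm.trans
      (eqOn_pdx hU (ih (hv.of_le_nat m.succ.le_succ)))

theorem pdy_iterate_pdx_iterate_eqOn (hU : IsOpen U) (m n : ℕ) {v : ℝ → ℝ → ℝ}
    (hv : ContDiffOn ℝ (n + m : ℕ) (uncurry v) U) :
    Set.EqOn (uncurry (pdy^[n] (pdx^[m] v))) (uncurry (pdx^[m] (pdy^[n] v))) U := by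
  induction n generalizing v with
  | zero => exact fun _ _ => rfl
  | succ n ih =>
    rw [iterate_succ_apply, iterate_succ_apply]
    exact (eqOn_iterate (eqOn_pdy hU) n (pdy_pdx_iterate_eqOn hU m (hv.of_le_nat (by omega)))).trans
      (ih (contDiffOn_pdy hU (hv.of_le_nat (by omega))))

theorem contDiffOn_pd (hU : IsOpen U) {m n k : ℕ}
    (hv : ContDiffOn ℝ (m + n + k : ℕ) (uncurry v) U) :
    ContDiffOn ℝ k (uncurry (pd m n v)) U :=
  contDiffOn_iterate (contDiffOn_pdx hU) m
    (contDiffOn_iterate (contDiffOn_pdy hU) n (hv.of_le_nat (by omega)))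

theorem pdx_pd (m n : ℕ) : pdx (pd m n v) = pd (m + 1) n v :=
  (iterate_succ_apply' pdx m _).symm

theorem eqOn_pd (hU : IsOpen U) (m n : ℕ) (h : Set.EqOn (uncurry v) (uncurry w) U) :
    Set.EqOn (uncurry (pd m n v)) (uncurry (pd m n w)) U :=
  eqOn_iterate (eqOn_pdx hU) m (eqOn_iterate (eqOn_pdy hU) n h)

theorem pd_pd_eqOn (hU : IsOpen U) (m n m' n' : ℕ)
    (hv : ContDiffOn ℝ (n + m' + n' : ℕ) (uncurry v) U) :
    Set.EqOn (uncurry (pd m n (pd m' n' v))) (uncurry (pd (m + m') (n + n') v)) U := by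
  simpa only [pd, iterate_add_apply] using eqOn_iterate (eqOn_pdx hU) m
    (pdy_iterate_pdx_iterate_eqOn hU m' n
      (contDiffOn_iterate (contDiffOn_pdy hU) n' (hv.of_le_nat (by omega))))

theorem pd_add_eqOn (hU : IsOpen U) (m n : ℕ) (hv : ContDiffOn ℝ (m + n : ℕ) (uncurry v) U)
    (hw : ContDiffOn ℝ (m + n : ℕ) (uncurry w) U) :
    Set.EqOn (uncurry (pd m n (v + w))) (uncurry (pd m n v + pd m n w)) U :=
  (eqOn_iterate (eqOn_pdx hU) m (iterate_add_eqOn (contDiffOn_pdy hU) (eqOn_pdy hU)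
      (pdy_add_eqOn hU) n (hv.of_le_nat (by omega)) (hw.of_le_nat (by omega)))).trans
    (iterate_add_eqOn (contDiffOn_pdx hU) (eqOn_pdx hU) (pdx_add_eqOn hU) m
      (contDiffOn_iterate (contDiffOn_pdy hU) n (hv.of_le_nat (by omega)))
      (contDiffOn_iterate (contDiffOn_pdy hU) n (hw.of_le_nat (by omega))))

theorem pd_smul (m n : ℕ) (c : ℝ) (v : ℝ → ℝ → ℝ) : pd m n (c • v) = c • pd m n v :=
  (congrArg (pdx^[m]) ((pdy_smul c).iterate_left n v)).trans ((pdx_smul c).iterate_left m _)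

end MixedPartials

theorem pd_add_two_left_of_pde {U : Set (ℝ × ℝ)} {u f : ℝ → ℝ → ℝ} {a : ℝ} (hU : IsOpen U)
    (ha : a ≠ 0) (hpde : ∀ p ∈ U, a * (pd 2 0 u p.1 p.2 + pd 0 2 u p.1 p.2) = - f p.1 p.2)
    {m n : ℕ} (hu : ContDiffOn ℝ (m + n + 2 : ℕ) (uncurry u) U) {p : ℝ × ℝ} (hp : p ∈ U) :
    pd (m + 2) n u p.1 p.2 = -pd m (n + 2) u p.1 p.2 - 1 / a * pd m n f p.1 p.2 := by
  have hlap : Set.EqOn (uncurry (pd 2 0 u + pd 0 2 u)) (uncurry ((-1 / a) • f)) U := fun q hq => by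
    change pd 2 0 u q.1 q.2 + pd 0 2 u q.1 q.2 = -1 / a * f q.1 q.2
    rw [div_mul_eq_mul_div, eq_div_iff ha]
    linear_combination hpde q hq
  have hsum : pd m n (pd 2 0 u + pd 0 2 u) p.1 p.2
      = pd m n (pd 2 0 u) p.1 p.2 + pd m n (pd 0 2 u) p.1 p.2 :=
    pd_add_eqOn hU m n (contDiffOn_pd hU (hu.of_le_nat (by omega)))
      (contDiffOn_pd hU (hu.of_le_nat (by omega))) hp
  have hxx : pd m n (pd 2 0 u) p.1 p.2 = pd (m + 2) n u p.1 p.2 :=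
    pd_pd_eqOn hU m n 2 0 (hu.of_le_nat (by omega)) hp
  have hyy : pd m n (pd 0 2 u) p.1 p.2 = pd m (n + 2) u p.1 p.2 :=
    pd_pd_eqOn hU m n 0 2 (hu.of_le_nat (by omega)) hp
  have hrhs : pd m n (pd 2 0 u + pd 0 2 u) p.1 p.2 = -1 / a * pd m n f p.1 p.2 := by
    have := eqOn_pd hU m n hlap hp
    rwa [pd_smul] at this
  linear_combination -hsum - hxx - hyy + hrhs

theorem mem_Lam {M : ℕ} {p : ℕ × ℕ} : p ∈ Lam M ↔ p.1 + p.2 ≤ M := by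
  simp only [Lam, mem_filter, mem_product, mem_range]
  omega

theorem mem_Lam1 {M : ℕ} {p : ℕ × ℕ} : p ∈ Lam1 M ↔ p.1 + p.2 ≤ M ∧ p.1 ≤ 1 := by
  simp only [Lam1, mem_filter, mem_Lam]

theorem sum_Lam_eq_sum_range_antidiagonal {β : Type*} [AddCommMonoid β] (M : ℕ)
    (g : ℕ × ℕ → β) :
    ∑ p ∈ Lam M, g p = ∑ k ∈ range (M + 1), ∑ p ∈ antidiagonal k, g p := by
  rw [← sum_fiberwise_of_maps_to (g := fun p => p.1 + p.2) (t := range (M + 1)) fun p hp => by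
    simpa [Nat.lt_succ_iff] using mem_Lam.mp hp]
  refine sum_congr rfl fun k hk => sum_congr ?_ fun _ _ => rfl
  ext p
  simp only [mem_filter, mem_Lam, HasAntidiagonal.mem_antidiagonal]
  simp only [mem_range] at hk
  omega

theorem closed_form_of_rec {M : ℕ} {c : ℝ} {D F : ℕ → ℕ → ℝ}
    (hrec : ∀ m n, m + n + 2 ≤ M → D (m + 2) n = -D m (n + 2) - c * F m n) (r : ℕ) :
    ∀ k n, 2 * k + r + n ≤ M → D (2 * k + r) n = (-1) ^ k * D r (n + 2 * k)
      + c * ∑ l ∈ range k, (-1) ^ (l + 1) * F (2 * k + r - 2 * (l + 1)) (n + 2 * l)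
  | 0, n, _ => by simp
  | k + 1, n, h => by
    have hshift : ∀ l ∈ range k,
        (-1 : ℝ) ^ (l + 1 + 1) * F (2 * k + r + 2 - 2 * (l + 1 + 1)) (n + 2 * (l + 1))
          = -((-1) ^ (l + 1) * F (2 * k + r - 2 * (l + 1)) (n + 2 + 2 * l)) := fun l _ => by
      rw [show 2 * k + r + 2 - 2 * (l + 1 + 1) = 2 * k + r - 2 * (l + 1) by omega,
        show n + 2 * (l + 1) = n + 2 + 2 * l by omega, pow_succ]
      ring
    rw [show 2 * (k + 1) + r = 2 * k + r + 2 by ring, hrec _ _ (by omega),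
      closed_form_of_rec hrec r k (n + 2) (by omega), sum_range_succ', sum_congr rfl hshift,
      sum_neg_distrib, show 2 * k + r + 2 - 2 * (0 + 1) = 2 * k + r by omega,
      show n + 2 + 2 * k = n + 2 * (k + 1) by ring, mul_zero, add_zero]
    ring

theorem sum_Lam1_mul_Gpoly (M : ℕ) (D : ℕ → ℕ → ℝ) (x y : ℝ) :
    ∑ p ∈ Lam1 M, D p.1 p.2 * Gpoly p.1 p.2 x y
      = ∑ p ∈ Lam M, (-1) ^ (p.1 / 2) * D (p.1 % 2) (p.2 + 2 * (p.1 / 2))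
          * x ^ p.1 * y ^ p.2 / (p.1 ! * p.2 ! : ℝ) := by
  simp_rw [Gpoly, mul_sum]
  rw [sum_sigma']
  refine sum_nbij' (fun q => (q.1.1 + 2 * q.2, q.1.2 - 2 * q.2))
    (fun p => ⟨(p.1 % 2, p.2 + 2 * (p.1 / 2)), p.1 / 2⟩) ?_ ?_ ?_ ?_ ?_
  · rintro ⟨⟨m, n⟩, l⟩ hq
    simp only [mem_sigma, mem_Lam1, mem_range] at hq
    simp only [mem_Lam]
    omega
  · rintro ⟨m, n⟩ hp
    simp only [mem_Lam] at hp
    simp only [mem_sigma, mem_Lam1, mem_range]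
    omega
  · rintro ⟨⟨m, n⟩, l⟩ hq
    simp only [mem_sigma, mem_Lam1, mem_range] at hq
    rw [show (m + 2 * l) % 2 = m by omega, show (m + 2 * l) / 2 = l by omega,
      show n - 2 * l + 2 * l = n by omega]
  · rintro ⟨m, n⟩ hp
    simp only [mem_Lam] at hp
    simp only [Prod.mk.injEq]
    omega
  · rintro ⟨⟨m, n⟩, l⟩ hq
    simp only [mem_sigma, mem_Lam1, mem_range] at hq
    simp only [show (m + 2 * l) % 2 = m by omega, show (m + 2 * l) / 2 = l by omega,
      show n - 2 * l + 2 * l = n by omega]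
    ring

theorem sum_Lam_mul_Hpoly {M : ℕ} (hM : 2 ≤ M) (F : ℕ → ℕ → ℝ) (x y : ℝ) :
    ∑ p ∈ Lam (M - 2), F p.1 p.2 * Hpoly p.1 p.2 x y
      = ∑ p ∈ Lam M, (∑ l ∈ range (p.1 / 2), (-1) ^ (l + 1) * F (p.1 - 2 * (l + 1)) (p.2 + 2 * l))
          * x ^ p.1 * y ^ p.2 / (p.1 ! * p.2 ! : ℝ) := by
  simp_rw [Hpoly, mul_sum, sum_mul, sum_div]
  rw [sum_sigma', sum_sigma']
  refine sum_nbij' (fun q => ⟨(q.1.1 + 2 * q.2, q.1.2 + 2 - 2 * q.2), q.2 - 1⟩)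
    (fun q => ⟨(q.1.1 - 2 * (q.2 + 1), q.1.2 + 2 * q.2), q.2 + 1⟩) ?_ ?_ ?_ ?_ ?_
  · rintro ⟨⟨m, n⟩, l⟩ hq
    simp only [mem_sigma, mem_Lam, mem_Icc, mem_range] at hq ⊢
    omega
  · rintro ⟨⟨m, n⟩, l⟩ hq
    simp only [mem_sigma, mem_Lam, mem_Icc, mem_range] at hq ⊢
    omega
  · rintro ⟨⟨m, n⟩, l⟩ hq
    simp only [mem_sigma, mem_Lam, mem_Icc] at hq
    rw [show m + 2 * l - 2 * (l - 1 + 1) = m by omega,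
      show n + 2 - 2 * l + 2 * (l - 1) = n by omega, show l - 1 + 1 = l by omega]
  · rintro ⟨⟨m, n⟩, l⟩ hq
    simp only [mem_sigma, mem_Lam, mem_range] at hq
    rw [show m - 2 * (l + 1) + 2 * (l + 1) = m by omega,
      show n + 2 * l + 2 - 2 * (l + 1) = n by omega, Nat.add_sub_cancel]
  · rintro ⟨⟨m, n⟩, l⟩ hq
    simp only [mem_sigma, mem_Lam, mem_Icc] at hq
    simp only [show l - 1 + 1 = l by omega, Nat.add_sub_cancel,
      show n + 2 - 2 * l + 2 * (l - 1) = n by omega]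
    ring

theorem sum_Lam_monomial_eq_of_rec {M : ℕ} (hM : 2 ≤ M) {c : ℝ} {D F : ℕ → ℕ → ℝ}
    (hrec : ∀ m n, m + n + 2 ≤ M → D (m + 2) n = -D m (n + 2) - c * F m n) (x y : ℝ) :
    ∑ p ∈ Lam M, D p.1 p.2 * x ^ p.1 * y ^ p.2 / (p.1 ! * p.2 ! : ℝ)
      = ∑ p ∈ Lam1 M, D p.1 p.2 * Gpoly p.1 p.2 x y
        + c * ∑ p ∈ Lam (M - 2), F p.1 p.2 * Hpoly p.1 p.2 x y := by
  rw [sum_Lam1_mul_Gpoly, sum_Lam_mul_Hpoly hM, mul_sum, ← sum_add_distrib]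
  refine sum_congr rfl fun p hp => ?_
  have hD := closed_form_of_rec hrec (p.1 % 2) (p.1 / 2) p.2 (by rw [mem_Lam] at hp; omega)
  rw [Nat.div_add_mod] at hD
  rw [hD]
  ring

section UnitInterval

variable {F : ℕ → ℝ → ℝ} {n : ℕ}

theorem iteratedDerivWithin_Icc_eq_of_hasDerivAt
    (hF : ∀ k < n, ∀ t ∈ Set.Icc (0 : ℝ) 1, HasDerivAt (F k) (F (k + 1) t) t) :
    ∀ k ≤ n, Set.EqOn (iteratedDerivWithin k (F 0) (Set.Icc 0 1)) (F k) (Set.Icc 0 1)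
  | 0, _ => by simp [Set.EqOn]
  | k + 1, hk => fun t ht => by
    have ih := iteratedDerivWithin_Icc_eq_of_hasDerivAt hF k (by omega)
    rw [iteratedDerivWithin_succ, derivWithin_congr ih (ih ht)]
    exact (hF k hk t ht).hasDerivWithinAt.derivWithin (uniqueDiffOn_Icc zero_lt_one t ht)

theorem exists_taylor_lagrange_of_hasDerivAt
    (hF : ∀ k ≤ n, ∀ t ∈ Set.Icc (0 : ℝ) 1, HasDerivAt (F k) (F (k + 1) t) t) :
    ∃ t ∈ Set.Ioo (0 : ℝ) 1,
      F 0 1 - ∑ k ∈ range (n + 1), F k 0 / k ! = F (n + 1) t / (n + 1)! := by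
  have hiter := iteratedDerivWithin_Icc_eq_of_hasDerivAt (n := n + 1) fun k hk => hF k (by omega)
  have hdiff : ∀ k ≤ n,
      DifferentiableOn ℝ (iteratedDerivWithin k (F 0) (Set.Icc 0 1)) (Set.Icc 0 1) :=
    fun k hk t ht => (hF k hk t ht).differentiableAt.differentiableWithinAt.congr
      (hiter k (by omega)) (hiter k (by omega) ht)
  have hpoly : taylorWithinEval (F 0) n (Set.Icc 0 1) 0 1 = ∑ k ∈ range (n + 1), F k 0 / k ! := by
    rw [taylor_within_apply]
    refine sum_congr rfl fun k hk => ?_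
    rw [hiter k (by simp at hk; omega) (Set.left_mem_Icc.2 zero_le_one)]
    simp [div_eq_inv_mul]
  obtain ⟨t, ht, h⟩ := taylor_mean_remainder_lagrange (n := n) (zero_ne_one' ℝ)
    (by rw [Set.uIcc_of_le zero_le_one]
        exact contDiffOn_of_differentiableOn_deriv fun k hk => hdiff k (by exact_mod_cast hk))
    (by rw [Set.uIcc_of_le zero_le_one, Set.uIoo_of_le zero_le_one]
        exact (hdiff n le_rfl).mono Set.Ioo_subset_Icc_self)
  rw [Set.uIoo_of_le zero_le_one] at ht
  rw [Set.uIcc_of_le zero_le_one, hpoly, hiter (n + 1) le_rfl (Set.Ioo_subset_Icc_self ht)] at h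
  exact ⟨t, ht, by simpa using h⟩

end UnitInterval

section LineTaylor

variable {U : Set (ℝ × ℝ)} {v : ℝ → ℝ → ℝ} {x y ξ η : ℝ}

/-- `(x ∂ₓ + y ∂ᵧ)^k v`, expanded by the binomial theorem. -/
noncomputable def dirDerivPow (v : ℝ → ℝ → ℝ) (x y : ℝ) (k : ℕ) : ℝ → ℝ → ℝ := fun ξ η =>
  ∑ ij ∈ antidiagonal k, (k.choose ij.1 : ℝ) * (x ^ ij.1 * y ^ ij.2 * pd ij.1 ij.2 v ξ η)

theorem dirDerivPow_zero : dirDerivPow v x y 0 = v := by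
  funext ξ η
  simp [dirDerivPow, pd]

theorem dirDerivPow_succ (k : ℕ) :
    dirDerivPow v x y (k + 1) ξ η = ∑ ij ∈ antidiagonal k, (k.choose ij.1 : ℝ)
      * (x ^ ij.1 * y ^ ij.2 * (x * pd (ij.1 + 1) ij.2 v ξ η + y * pd ij.1 (ij.2 + 1) v ξ η)) := by
  have hpascal := sum_antidiagonal_choose_succ_mul (fun i j => x ^ i * y ^ j * pd i j v ξ η) k
  rw [dirDerivPow, hpascal, ← sum_add_distrib]
  refine sum_congr rfl fun ij hij => ?_
  rw [← Nat.choose_symm_of_eq_add (mem_antidiagonal.mp hij).symm]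
  ring

theorem sum_range_dirDerivPow_div_factorial (M : ℕ) :
    ∑ k ∈ range (M + 1), dirDerivPow v x y k ξ η / k !
      = ∑ p ∈ Lam M, pd p.1 p.2 v ξ η * x ^ p.1 * y ^ p.2 / (p.1 ! * p.2 ! : ℝ) := by
  rw [sum_Lam_eq_sum_range_antidiagonal]
  refine sum_congr rfl fun k _ => ?_
  rw [dirDerivPow, sum_div]
  refine sum_congr rfl fun ij hij => ?_
  obtain rfl := mem_antidiagonal.mp hij
  rw [Nat.cast_choose ℝ (Nat.le_add_right _ _), Nat.add_sub_cancel_left]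
  field_simp

theorem hasDerivAt_comp_line {t : ℝ} (hv : DifferentiableAt ℝ (uncurry v) (ξ + t * x, η + t * y)) :
    HasDerivAt (fun s => v (ξ + s * x) (η + s * y))
      (x * pdx v (ξ + t * x) (η + t * y) + y * pdy v (ξ + t * x) (η + t * y)) t := by
  have hline : HasDerivAt (fun s : ℝ => (ξ + s * x, η + s * y)) (x, y) t :=
    (((hasDerivAt_id t).mul_const x).const_add ξ).prodMk
      (((hasDerivAt_id t).mul_const y).const_add η) |>.congr_deriv (by simp)
  have hxy : ((x, y) : ℝ × ℝ) = x • ((1 : ℝ), (0 : ℝ)) + y • ((0 : ℝ), (1 : ℝ)) := by simp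
  have hx : pdx v (ξ + t * x) (η + t * y) = _ := pdx_eq_fderiv hv
  have hy : pdy v (ξ + t * x) (η + t * y) = _ := pdy_eq_fderiv hv
  refine (hv.hasFDerivAt.comp_hasDerivAt t hline).congr_deriv ?_
  rw [hx, hy, hxy, map_add, map_smul, map_smul, smul_eq_mul, smul_eq_mul]

theorem hasDerivAt_dirDerivPow_comp_line (hU : IsOpen U) {k : ℕ}
    (hv : ContDiffOn ℝ (k + 1 : ℕ) (uncurry v) U) {t : ℝ} (ht : (ξ + t * x, η + t * y) ∈ U) :
    HasDerivAt (fun s => dirDerivPow v x y k (ξ + s * x) (η + s * y))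
      (dirDerivPow v x y (k + 1) (ξ + t * x) (η + t * y)) t := by
  rw [dirDerivPow_succ]
  refine HasDerivAt.fun_sum fun ij hij => ?_
  obtain rfl := mem_antidiagonal.mp hij
  have hpdy := pd_pd_eqOn hU 0 1 ij.1 ij.2 (hv.of_le_nat (by omega)) ht
  rw [zero_add, add_comm 1] at hpdy
  have hline := hasDerivAt_comp_line
    ((contDiffOn_pd hU (k := 1) hv).differentiableAt_of_isOpen (n := 0) hU ht)
  rw [pdx_pd, show pdy (pd ij.1 ij.2 v) (ξ + t * x) (η + t * y) = _ from hpdy] at hline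
  exact (hline.const_mul _).const_mul _

end LineTaylor

theorem abs_dirDerivPow_le {v : ℝ → ℝ → ℝ} {x y ξ η B : ℝ} {k : ℕ}
    (hB : ∀ ij ∈ antidiagonal k, |pd ij.1 ij.2 v ξ η| ≤ B) :
    |dirDerivPow v x y k ξ η| ≤ (|x| + |y|) ^ k * B := by
  rw [(Commute.all _ _).add_pow', sum_mul]
  refine (abs_sum_le_sum_abs _ _).trans (sum_le_sum fun ij hij => ?_)
  calc |(k.choose ij.1 : ℝ) * (x ^ ij.1 * y ^ ij.2 * pd ij.1 ij.2 v ξ η)|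
      = k.choose ij.1 • (|x| ^ ij.1 * |y| ^ ij.2) * |pd ij.1 ij.2 v ξ η| := by
        rw [nsmul_eq_mul, abs_mul, abs_mul, abs_mul, abs_pow, abs_pow, Nat.abs_cast]
        ring
    _ ≤ k.choose ij.1 • (|x| ^ ij.1 * |y| ^ ij.2) * B := by
        gcongr
        exact hB ij hij

theorem exists_bound_pd_antidiagonal {U K : Set (ℝ × ℝ)} (hU : IsOpen U) (hK : IsCompact K)
    (hKU : K ⊆ U) {v : ℝ → ℝ → ℝ} {k : ℕ} (hv : ContDiffOn ℝ k (uncurry v) U) :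
    ∃ B > 0, ∀ q ∈ K, ∀ ij ∈ antidiagonal k, |pd ij.1 ij.2 v q.1 q.2| ≤ B := by
  have hcont : ContinuousOn (fun q : ℝ × ℝ => ∑ ij ∈ antidiagonal k, |pd ij.1 ij.2 v q.1 q.2|) K :=
    continuousOn_finsetSum _ fun ij hij => ((contDiffOn_pd hU (k := 0)
      (hv.of_le_nat (mem_antidiagonal.mp hij).le)).continuousOn.mono hKU).abs
  obtain ⟨C, hC⟩ := hK.exists_bound_of_continuousOn hcont
  refine ⟨max C 1, lt_max_of_lt_right one_pos, fun q hq ij hij => ?_⟩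
  calc |pd ij.1 ij.2 v q.1 q.2|
      ≤ ∑ ij ∈ antidiagonal k, |pd ij.1 ij.2 v q.1 q.2| :=
        single_le_sum (f := fun ij => |pd ij.1 ij.2 v q.1 q.2|) (fun _ _ => abs_nonneg _) hij
    _ ≤ C := (le_abs_self _).trans (by simpa using hC q hq)
    _ ≤ max C 1 := le_max_left _ _

theorem exists_taylor_lagrange_segment {U : Set (ℝ × ℝ)} (hU : IsOpen U) {u : ℝ → ℝ → ℝ} {M : ℕ}
    (hu : ContDiffOn ℝ (M + 1 : ℕ) (uncurry u) U) {ξ η x y : ℝ}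
    (hseg : ∀ t ∈ Set.Icc (0 : ℝ) 1, (ξ + t * x, η + t * y) ∈ U) :
    ∃ t ∈ Set.Ioo (0 : ℝ) 1,
      u (ξ + x) (η + y) - ∑ p ∈ Lam M, pd p.1 p.2 u ξ η * x ^ p.1 * y ^ p.2 / (p.1 ! * p.2 ! : ℝ)
        = dirDerivPow u x y (M + 1) (ξ + t * x) (η + t * y) / (M + 1)! := by
  obtain ⟨t, ht, h⟩ := exists_taylor_lagrange_of_hasDerivAt
    (F := fun k s => dirDerivPow u x y k (ξ + s * x) (η + s * y)) (n := M)
    fun k hk s hs => hasDerivAt_dirDerivPow_comp_line hU (hu.of_le_nat (by omega)) (hseg s hs)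
  refine ⟨t, ht, ?_⟩
  simpa [dirDerivPow_zero, sum_range_dirDerivPow_div_factorial] using h

theorem stmt12
    (M : ℕ) (hM : 2 ≤ M) (a : ℝ) (ha : 0 < a) (u f : ℝ → ℝ → ℝ) (xs ys : ℝ)
    (U : Set (ℝ × ℝ)) (hU : IsOpen U) (hmem : (xs, ys) ∈ U)
    (hu : ContDiffOn ℝ (M + 1 : ℕ) (Function.uncurry u) U)
    (hpde : ∀ p ∈ U, a * (pd 2 0 u p.1 p.2 + pd 0 2 u p.1 p.2) = - f p.1 p.2) :
    ∃ C > (0 : ℝ), ∃ h₀ > (0 : ℝ), ∀ h ∈ Set.Ioc (0 : ℝ) h₀, ∀ x y : ℝ,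
      |x| ≤ 2 * h → |y| ≤ 2 * h →
      |u (xs + x) (ys + y)
        - (∑ p ∈ Lam1 M, pd p.1 p.2 u xs ys * Gpoly p.1 p.2 x y)
        - (1 / a) * (∑ p ∈ Lam (M - 2), pd p.1 p.2 f xs ys * Hpoly p.1 p.2 x y)|
        ≤ C * h ^ (M + 1) := by
  obtain ⟨ρ, hρ, hρU⟩ := Metric.nhds_basis_closedBall.mem_iff.mp (hU.mem_nhds hmem)
  obtain ⟨B, hB, hbound⟩ :=
    exists_bound_pd_antidiagonal hU (isCompact_closedBall _ _) hρU hu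
  refine ⟨4 ^ (M + 1) * B, by positivity, ρ / 2, by positivity, ?_⟩
  rintro h ⟨hh, hhρ⟩ x y hx hy
  have hseg : ∀ t ∈ Set.Icc (0 : ℝ) 1, (xs + t * x, ys + t * y) ∈ Metric.closedBall (xs, ys) ρ := by
    intro t ⟨ht0, ht1⟩
    simp only [Metric.mem_closedBall, Prod.dist_eq, Real.dist_eq, add_sub_cancel_left, abs_mul,
      abs_of_nonneg ht0]
    exact max_le (by nlinarith [abs_nonneg x]) (by nlinarith [abs_nonneg y])
  obtain ⟨t, ht, hrem⟩ := exists_taylor_lagrange_segment hU hu fun t ht => hρU (hseg t ht)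
  have hrec : ∀ m n, m + n + 2 ≤ M →
      pd (m + 2) n u xs ys = -pd m (n + 2) u xs ys - 1 / a * pd m n f xs ys :=
    fun m n hmn => pd_add_two_left_of_pde hU ha.ne' hpde (hu.of_le_nat (by omega)) hmem
  rw [sub_sub, ← sum_Lam_monomial_eq_of_rec hM (D := fun m n => pd m n u xs ys)
    (F := fun m n => pd m n f xs ys) hrec, hrem, abs_div, Nat.abs_cast]
  calc |dirDerivPow u x y (M + 1) (xs + t * x) (ys + t * y)| / (M + 1)!
      ≤ |dirDerivPow u x y (M + 1) (xs + t * x) (ys + t * y)| :=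
        div_le_self (abs_nonneg _) (by exact_mod_cast (M + 1).factorial_pos)
    _ ≤ (|x| + |y|) ^ (M + 1) * B :=
        abs_dirDerivPow_le (hbound _ (hseg t (Set.Ioo_subset_Icc_self ht)))
    _ ≤ (4 * h) ^ (M + 1) * B := by gcongr; linarith
    _ = 4 ^ (M + 1) * B * h ^ (M + 1) := by ring
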